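/- arXiv:2305.08813 — 2 statements merged into one kernel-verified Lean document; each statement's English description precedes it below -/
import Mathlib

section
/- Define g : [0, π) → [0, π) by g(z) = arccos( ((π − z) cos z + sin z)/π ), let g^l be the l-fold iterate of g (g^0 = identity), and for an integer L ≥ 0 define F_L(θ) = (1/(L+1)) Σ_{l=0}^{L} [ cos(g^l(θ)) · Π_{l'=l}^{L−1} (1 − g^{l'}(θ)/π) ] (empty product equal to 1). Then for all integers L_1 > L_2 ≥ 0 there exists δ > 0 such that for all θ ∈ (0, δ): F_{L_1}(θ) < F_{L_2}(θ). -/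
/-- The layer-to-layer embedding-angle map of an infinitely wide ReLU network:
`g z = arccos(((π − z) cos z + sin z)/π)`. -/
noncomputable def g (z : ℝ) : ℝ :=
  Real.arccos (((Real.pi - z) * Real.cos z + Real.sin z) / Real.pi)

/-- The cosine of the model-gradient angle of an infinitely wide depth-`L` ReLU network
(Theorem 4.3 of the paper):
`F L θ = (1/(L+1)) ∑_{l=0}^{L} cos (g^[l] θ) ∏_{l'=l}^{L−1} (1 − g^[l'] θ / π)`,
with the empty product equal to `1`. -/
noncomputable def F (L : ℕ) (θ : ℝ) : ℝ :=
  (1 / ((L : ℝ) + 1)) * ∑ l ∈ Finset.range (L + 1),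
    Real.cos (g^[l] θ) * ∏ l' ∈ Finset.Ico l L, (1 - g^[l'] θ / Real.pi)

/-!
As `θ → 0⁺`, `F L θ = 1 - L θ / (2π) + o(θ)`. Indeed `z - z² ≤ g z ≤ z` near `0`, so `g` has right
derivative `1` at its fixed point `0`, and so has each iterate `g^[l]`. Hence `cos (g^[l] θ)` has
right derivative `0` and each factor `1 - g^[l'] θ / π` has right derivative `-1/π`, so the `l`-th
summand has slope `-(L - l)/π`, whose mean over `l ≤ L` is `-L/(2π)`. All `F L` take the value `1`
at `0` and their right derivatives there strictly decrease in `L`.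
-/

open Real Filter Set Topology Finset Asymptotics

lemma mul_cos_le_sin {z : ℝ} (hz₀ : 0 ≤ z) (hzπ : z ≤ π) : z * cos z ≤ sin z := by
  rcases lt_or_ge z (π / 2) with hz | hz
  · have hcos : 0 < cos z := cos_pos_of_mem_Ioo ⟨by linarith [pi_pos], hz⟩
    calc z * cos z ≤ tan z * cos z := by gcongr; exact le_tan hz₀ hz
      _ = sin z := tan_mul_cos hcos.ne'
  · have hcos : cos z ≤ 0 := cos_nonpos_of_pi_div_two_le_of_le hz (by linarith)
    nlinarith [sin_nonneg_of_nonneg_of_le_pi hz₀ hzπ]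

lemma cos_g {z : ℝ} (hz₀ : 0 ≤ z) (hzπ : z ≤ π) :
    cos (g z) = ((π - z) * cos z + sin z) / π := by
  have hsin := sin_nonneg_of_nonneg_of_le_pi hz₀ hzπ
  refine cos_arccos ?_ ?_
  · rw [le_div_iff₀ pi_pos]
    nlinarith [neg_one_le_cos z]
  · rw [div_le_one pi_pos]
    nlinarith [cos_le_one z, sin_le hz₀]

lemma g_le_self {z : ℝ} (hz₀ : 0 ≤ z) (hzπ : z ≤ π) : g z ≤ z := by
  calc g z ≤ arccos (cos z) := by
        refine arccos_le_arccos ?_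
        rw [le_div_iff₀ pi_pos]
        linarith [mul_cos_le_sin hz₀ hzπ]
    _ = z := arccos_cos hz₀ hzπ

lemma sub_sq_le_g {z : ℝ} (hz₀ : 0 ≤ z) (hz₁ : z ≤ 1) : z - z ^ 2 ≤ g z := by
  have hzπ : z ≤ π := by linarith [pi_gt_three]
  have hcos : 1 - cos z ≥ z ^ 2 / 2 - z ^ 4 * (5 / 96) := by
    have := (abs_le.1 (cos_bound (x := z) (by rwa [abs_of_nonneg hz₀]))).2
    rw [abs_of_nonneg hz₀] at this
    linarith
  have hsin : sin z - z * cos z ≤ z ^ 3 / 2 := by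
    nlinarith [sin_le hz₀, one_sub_sq_div_two_le_cos (x := z)]
  have hcos_g : (z - z ^ 2) ^ 2 ≤ 2 * (1 - cos (g z)) := by
    have key : π * (z - z ^ 2) ^ 2 ≤ 2 * π * (1 - cos z) - 2 * (sin z - z * cos z) := by
      -- the slack is at least `(53/48) π z³ (1 - z) + z³ (43π/48 - 1)`
      have hz₁' : 0 ≤ π * (z ^ 3 * (1 - z)) := by have := pi_pos; positivity
      have hπ : 0 ≤ z ^ 3 * (π - 3) := by have := pi_gt_three; positivity
      nlinarith [mul_le_mul_of_nonneg_left hcos pi_pos.le]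
    rw [cos_g hz₀ hzπ, ← mul_le_mul_iff_right₀ pi_pos]
    calc π * (z - z ^ 2) ^ 2 ≤ 2 * π * (1 - cos z) - 2 * (sin z - z * cos z) := key
      _ = π * (2 * (1 - ((π - z) * cos z + sin z) / π)) := by field_simp; ring
  have hg : (z - z ^ 2) ^ 2 ≤ g z ^ 2 := by linarith [one_sub_sq_div_two_le_cos (x := g z)]
  exact (pow_le_pow_iff_left₀ (by nlinarith) (arccos_nonneg _) two_ne_zero).1 hg

lemma g_zero : g 0 = 0 := by simp [g, pi_ne_zero]

lemma iterate_g_zero (l : ℕ) : g^[l] 0 = 0 := Function.iterate_fixed g_zero l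

lemma mapsTo_g_Ici : MapsTo g (Ici 0) (Ici 0) := fun _ _ ↦ arccos_nonneg _

lemma hasDerivWithinAt_g : HasDerivWithinAt g 1 (Ici 0) 0 := by
  rw [hasDerivWithinAt_iff_isLittleO, g_zero]
  refine IsBigO.trans_isLittleO (g := fun z : ℝ ↦ z ^ 2) ?_
    ((isLittleO_pow_id one_lt_two).mono nhdsWithin_le_nhds |>.congr_right (by simp))
  refine IsBigO.of_bound 1 ?_
  filter_upwards [Icc_mem_nhdsGE zero_lt_one] with z ⟨hz₀, hz₁⟩
  have hzπ : z ≤ π := by linarith [pi_gt_three]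
  simp only [sub_zero, smul_eq_mul, mul_one, one_mul, Real.norm_eq_abs, abs_sq]
  exact abs_le.2 ⟨by linarith [sub_sq_le_g hz₀ hz₁], by linarith [g_le_self hz₀ hzπ, sq_nonneg z]⟩

lemma hasDerivWithinAt_iterate_g (l : ℕ) : HasDerivWithinAt g^[l] 1 (Ici 0) 0 := by
  simpa using HasDerivWithinAt.iterate 0 hasDerivWithinAt_g g_zero mapsTo_g_Ici l

lemma hasDerivWithinAt_prod_one_sub_iterate_g (s : Finset ℕ) :
    HasDerivWithinAt (fun θ ↦ ∏ l ∈ s, (1 - g^[l] θ / π)) (-(#s : ℝ) / π) (Ici 0) 0 := by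
  refine (HasDerivWithinAt.fun_finsetProd (u := s)
    fun l _ ↦ ((hasDerivWithinAt_iterate_g l).div_const π).const_sub 1).congr_deriv ?_
  simp [iterate_g_zero, div_eq_mul_inv]

lemma hasDerivWithinAt_F_term (l L : ℕ) :
    HasDerivWithinAt (fun θ ↦ cos (g^[l] θ) * ∏ l' ∈ Ico l L, (1 - g^[l'] θ / π))
      (-((L - l : ℕ) : ℝ) / π) (Ici 0) 0 := by
  simpa [iterate_g_zero] using
    (hasDerivWithinAt_iterate_g l).cos.fun_mul (hasDerivWithinAt_prod_one_sub_iterate_g (Ico l L))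

lemma sum_range_succ_sub_mul_two (L : ℕ) : (∑ l ∈ range (L + 1), (L - l)) * 2 = L * (L + 1) := by
  have hreflect : ∑ l ∈ range (L + 1), (L - l) = ∑ l ∈ range (L + 1), l := by
    simpa using sum_range_reflect (fun l ↦ l) (L + 1)
  rw [hreflect, sum_range_id_mul_two, add_tsub_cancel_right, mul_comm]

lemma hasDerivWithinAt_F (L : ℕ) : HasDerivWithinAt (F L) (-L / (2 * π)) (Ici 0) 0 := by
  refine ((HasDerivWithinAt.fun_sum fun l _ ↦ hasDerivWithinAt_F_term l L).const_mul
    (1 / ((L : ℝ) + 1))).congr_deriv ?_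
  have hsum : (∑ l ∈ range (L + 1), ((L - l : ℕ) : ℝ)) * 2 = L * (L + 1) := by
    exact_mod_cast sum_range_succ_sub_mul_two L
  simp only [neg_div, sum_neg_distrib, ← sum_div]
  field_simp
  linarith

lemma F_zero (L : ℕ) : F L 0 = 1 := by
  simp only [F, iterate_g_zero, cos_zero, zero_div, sub_zero, prod_const_one, mul_one, sum_const,
    card_range, nsmul_eq_mul]
  push_cast
  field_simp

lemma HasDerivWithinAt.eventually_nhdsGT_lt_of_neg {f : ℝ → ℝ} {f' x : ℝ}
    (hf : HasDerivWithinAt f f' (Ici x) x) (hf' : f' < 0) : ∀ᶠ y in 𝓝[>] x, f y < f x := by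
  filter_upwards [hf.Ioi_of_Ici.limsup_slope_le' (lt_irrefl x) hf', self_mem_nhdsWithin]
    with y hslope hxy
  rwa [slope_def_field, div_lt_iff₀ (sub_pos.2 hxy), zero_mul, sub_neg] at hslope

/-- depth monotonicity of the better-separation property, a consequence
of Theorem 4.4 of the paper. For all integers `L₁ > L₂ ≥ 0` there exists `δ > 0` such
that for all `θ ∈ (0, δ)`: `F L₁ θ < F L₂ θ` (a deeper ReLU network produces a strictly
larger model-gradient angle than a shallower one). -/
theorem F_depth_strict_mono (L₁ L₂ : ℕ) (h : L₂ < L₁) :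
    ∃ δ > 0, ∀ θ ∈ Set.Ioo (0 : ℝ) δ, F L₁ θ < F L₂ θ := by
  have hderiv : -(L₁ : ℝ) / (2 * π) - -L₂ / (2 * π) < 0 := by
    rw [← sub_div]
    exact div_neg_of_neg_of_pos (by simpa using h) (by positivity)
  have hev := ((hasDerivWithinAt_F L₁).sub (hasDerivWithinAt_F L₂)).eventually_nhdsGT_lt_of_neg
    hderiv
  simp only [Pi.sub_apply, F_zero, sub_self, sub_neg] at hev
  obtain ⟨δ, hδ, hsub⟩ := mem_nhdsGT_iff_exists_Ioo_subset.1 hev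
  exact ⟨δ, hδ, fun θ hθ ↦ hsub hθ⟩
end

section
/- Let x_1, …, x_n be nonzero vectors in ℝ^d, let G be the n×n Gram matrix with G_{ij} = ⟨x_i, x_j⟩, and let K be the n×n matrix with K_{ij} = ⟨x_i, x_j⟩ · (1 − θ_{ij}/π), where θ_{ij} = arccos(⟨x_i, x_j⟩/(‖x_i‖‖x_j‖)) is the angle between x_i and x_j (θ_{ii} = 0, so K_{ii} = ‖x_i‖²). Then λ_min(K) ≥ λ_min(G) and λ_max(K) ≤ λ_max(G); consequently, if G is positive definite, then K is positive definite and the condition numbers satisfy κ(K) = λ_max(K)/λ_min(K) ≤ λ_max(G)/λ_min(G) = κ(G). -/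
/-!
Write `1 - θ/π = 1/2 + arcsin(cos θ)/π`, so that `K = G ⊙ M` with
`M i j = 1/2 + arcsin ⟪u i, u j⟫ / π` for the normalized inputs `u i = x i / ‖x i‖`.
The Taylor series of `arcsin` has nonnegative coefficients and converges on all of `[-1, 1]`,
so by the Schur product theorem `M` is a limit of nonnegative combinations of Hadamard powers
of the positive semidefinite Gram matrix of the `u i`, hence positive semidefinite; moreover
`M i i = 1`. Consequently, for `λ = λ_min(G)` the matrix `K - λ I = (G - λ I) ⊙ M` is positive
semidefinite, and likewise `λ_max(G) I - K = (λ_max(G) I - G) ⊙ M`.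
-/

open scoped RealInnerProductSpace

open Filter Topology Set Nat

/-- A converse of Abel's theorem, valid for nonnegative coefficients. -/
lemma hasSum_of_tendsto_nhdsLT_one {a : ℕ → ℝ} (ha : ∀ n, 0 ≤ a n) (e : ℕ → ℕ) {f : ℝ → ℝ}
    {L : ℝ} (hf : ∀ s ∈ Ioo (0 : ℝ) 1, HasSum (fun n => a n * s ^ e n) (f s))
    (hL : Tendsto f (𝓝[<] 1) (𝓝 L)) : HasSum a L := by
  have hmem : ∀ᶠ s in 𝓝[<] (1 : ℝ), s ∈ Ioo (0 : ℝ) 1 := Ioo_mem_nhdsLT (by norm_num)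
  have hpartial (N : ℕ) : ∑ n ∈ Finset.range N, a n ≤ L := by
    have hpoly : Tendsto (fun s : ℝ => ∑ n ∈ Finset.range N, a n * s ^ e n) (𝓝[<] 1)
        (𝓝 (∑ n ∈ Finset.range N, a n)) := by
      have hcont : Continuous fun s : ℝ => ∑ n ∈ Finset.range N, a n * s ^ e n := by fun_prop
      simpa using (hcont.tendsto 1).mono_left nhdsWithin_le_nhds
    refine le_of_tendsto_of_tendsto hpoly hL (hmem.mono fun s hs => ?_)
    exact sum_le_hasSum _ (fun n _ => mul_nonneg (ha n) (pow_nonneg hs.1.le _)) (hf s hs)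
  have hsum : Summable a := summable_of_sum_range_le ha hpartial
  refine hsum.hasSum_iff.2 (le_antisymm (hsum.tsum_le_of_sum_range_le hpartial) ?_)
  refine le_of_tendsto hL (hmem.mono fun s hs => hasSum_le (fun n => ?_) (hf s hs) hsum.hasSum)
  exact mul_le_of_le_one_right (ha n) (pow_le_one₀ hs.1.le hs.2.le)

namespace Real

lemma ascPochhammer_eval_one_half (n : ℕ) :
    (ascPochhammer ℝ n).eval (1 / 2) = n ! * centralBinom n / 4 ^ n := by
  induction n with
  | zero => simp
  | succ n ih =>
    have h : ((n + 1 : ℕ) : ℝ) * centralBinom (n + 1) = 2 * (2 * n + 1) * centralBinom n := by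
      exact_mod_cast succ_mul_centralBinom_succ n
    rw [ascPochhammer_succ_eval, ih, factorial_succ, pow_succ]
    push_cast at h ⊢
    field_simp
    linear_combination -2 * h

lemma choose_one_half_add_sub_one (n : ℕ) :
    Ring.choose ((1 / 2 : ℝ) + n - 1) n = centralBinom n / 4 ^ n := by
  have hn : (n ! : ℝ) ≠ 0 := by positivity
  rw [← Ring.multichoose_eq, ← mul_right_inj' hn, ← nsmul_eq_mul,
    Ring.factorial_nsmul_multichoose_eq_ascPochhammer, Polynomial.ascPochhammer_smeval_eq_eval,
    ascPochhammer_eval_one_half, mul_div_assoc]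

lemma hasSum_centralBinom_mul_pow {x : ℝ} (hx : |x| < 1) :
    HasSum (fun n => centralBinom n / 4 ^ n * x ^ n) (1 / √(1 - x)) := by
  have h := (one_div_one_sub_rpow_hasFPowerSeriesOnBall_zero (1 / 2)).hasSum (y := x)
    (by simpa [enorm_eq_nnnorm, ← NNReal.coe_lt_coe] using hx)
  simp only [choose_one_half_add_sub_one, FormalMultilinearSeries.ofScalars_apply_eq,
    smul_eq_mul] at h
  simpa [Real.sqrt_eq_rpow] using h

lemma hasSum_centralBinom_mul_pow_two_mul {t : ℝ} (ht : |t| < 1) :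
    HasSum (fun n => centralBinom n / 4 ^ n * t ^ (2 * n)) (1 / √(1 - t ^ 2)) := by
  simpa only [pow_mul] using hasSum_centralBinom_mul_pow (x := t ^ 2) (by simpa using ht)

noncomputable def arcsinCoeff (n : ℕ) : ℝ := centralBinom n / (4 ^ n * (2 * n + 1))

lemma arcsinCoeff_nonneg (n : ℕ) : 0 ≤ arcsinCoeff n := by
  unfold arcsinCoeff; positivity

lemma arcsinCoeff_mul (n : ℕ) : arcsinCoeff n * (2 * n + 1) = centralBinom n / 4 ^ n := by
  unfold arcsinCoeff; field_simp

lemma arcsinCoeff_le (n : ℕ) : arcsinCoeff n ≤ centralBinom n / 4 ^ n := by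
  rw [← arcsinCoeff_mul]
  exact le_mul_of_one_le_right (arcsinCoeff_nonneg n) (by linarith [n.cast_nonneg (α := ℝ)])

lemma summable_arcsinCoeff_mul_pow {t : ℝ} (ht : |t| < 1) :
    Summable fun n => arcsinCoeff n * t ^ (2 * n + 1) := by
  refine .of_norm_bounded (hasSum_centralBinom_mul_pow_two_mul (t := |t|) (by simpa)).summable
    fun n => ?_
  rw [norm_mul, norm_pow, Real.norm_eq_abs, Real.norm_eq_abs, abs_of_nonneg (arcsinCoeff_nonneg n),
    pow_succ]
  have : |t| ^ (2 * n) * |t| ≤ |t| ^ (2 * n) := mul_le_of_le_one_right (by positivity) ht.le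
  gcongr ?_ * ?_
  exact arcsinCoeff_le n

lemma hasDerivAt_tsum_arcsinCoeff_mul_pow {t : ℝ} (ht : |t| < 1) :
    HasDerivAt (fun s => ∑' n, arcsinCoeff n * s ^ (2 * n + 1)) (1 / √(1 - t ^ 2)) t := by
  obtain ⟨r, htr, hr⟩ := exists_between ht
  rw [abs_lt] at htr
  replace hr : |r| < 1 := by rwa [abs_of_nonneg (by linarith [abs_nonneg t])]
  rw [← (hasSum_centralBinom_mul_pow_two_mul ht).tsum_eq]
  refine hasDerivAt_tsum_of_isPreconnected (g := fun n s => arcsinCoeff n * s ^ (2 * n + 1))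
    (g' := fun n s => centralBinom n / 4 ^ n * s ^ (2 * n))
    (hasSum_centralBinom_mul_pow_two_mul hr).summable
    isOpen_Ioo isPreconnected_Ioo (fun n y _ => ?_) (fun n y hy => ?_) htr
    (summable_arcsinCoeff_mul_pow ht) htr
  · refine ((hasDerivAt_pow _ y).const_mul _).congr_deriv ?_
    rw [← arcsinCoeff_mul]
    push_cast
    ring
  · rw [norm_mul, norm_pow, Real.norm_eq_abs, Real.norm_eq_abs, abs_of_nonneg (by positivity)]
    gcongr
    exact abs_le.2 ⟨hy.1.le, hy.2.le⟩

lemma hasSum_arcsin_of_abs_lt {t : ℝ} (ht : |t| < 1) :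
    HasSum (fun n => arcsinCoeff n * t ^ (2 * n + 1)) (arcsin t) := by
  suffices h : ∀ s ∈ Ioo (-1 : ℝ) 1, ∑' n, arcsinCoeff n * s ^ (2 * n + 1) - arcsin s = 0 by
    have := h t (abs_lt.1 ht)
    exact (summable_arcsinCoeff_mul_pow ht).hasSum_iff.2 (by linarith)
  intro s hs
  have hderiv : ∀ y ∈ Ioo (-1 : ℝ) 1,
      HasDerivAt (fun s => ∑' n, arcsinCoeff n * s ^ (2 * n + 1) - arcsin s) 0 y := fun y hy =>
    ((hasDerivAt_tsum_arcsinCoeff_mul_pow (abs_lt.2 hy)).sub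
      (hasDerivAt_arcsin hy.1.ne' hy.2.ne)).congr_deriv (sub_self _)
  have := isOpen_Ioo.is_const_of_deriv_eq_zero isPreconnected_Ioo
    (fun y hy => (hderiv y hy).differentiableAt.differentiableWithinAt)
    (fun y hy => (hderiv y hy).deriv) hs (show (0 : ℝ) ∈ Ioo (-1) 1 by norm_num)
  simpa using this

lemma hasSum_arcsinCoeff : HasSum arcsinCoeff (π / 2) := by
  rw [← arcsin_one]
  refine hasSum_of_tendsto_nhdsLT_one arcsinCoeff_nonneg (fun n => 2 * n + 1)
    (fun s hs => hasSum_arcsin_of_abs_lt ?_)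
    ((continuous_arcsin.tendsto 1).mono_left nhdsWithin_le_nhds)
  rw [abs_of_pos hs.1]
  exact hs.2

lemma hasSum_arcsin {t : ℝ} (ht : |t| ≤ 1) :
    HasSum (fun n => arcsinCoeff n * t ^ (2 * n + 1)) (arcsin t) := by
  rcases ht.lt_or_eq with ht | ht
  · exact hasSum_arcsin_of_abs_lt ht
  rcases abs_eq_abs.1 (ht.trans abs_one.symm) with rfl | rfl
  · simpa [arcsin_one] using hasSum_arcsinCoeff
  · simpa [arcsin_neg, arcsin_one, pow_succ, pow_mul] using hasSum_arcsinCoeff.neg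

end Real

open scoped ComplexOrder

namespace Matrix

lemma sub_hadamard {m n α : Type*} [NonUnitalNonAssocRing α] (A B M : Matrix m n α) :
    (A - B) ⊙ M = A ⊙ M - B ⊙ M := by
  ext; simp [sub_mul]

variable {ι 𝕜 : Type*} [Fintype ι] [RCLike 𝕜]

lemma PosSemidef.map_pow {A : Matrix ι ι 𝕜} (hA : A.PosSemidef) (k : ℕ) :
    (A.map (· ^ k)).PosSemidef := by
  induction k with
  | zero =>
    convert posSemidef_vecMulVec_self_star (1 : ι → 𝕜) using 1
    ext; simp [vecMulVec]
  | succ k ih =>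
    have : A.map (· ^ (k + 1)) = A.map (· ^ k) ⊙ A := by ext; simp [pow_succ]
    exact this ▸ ih.hadamard hA

lemma PosSemidef.map_of_hasSum {A : Matrix ι ι ℝ} (hA : A.PosSemidef) {a : ℕ → ℝ}
    (ha : ∀ n, 0 ≤ a n) (e : ℕ → ℕ) {f : ℝ → ℝ}
    (hf : ∀ i j, HasSum (fun n => a n * A i j ^ e n) (f (A i j))) : (A.map f).PosSemidef := by
  rw [posSemidef_iff_dotProduct_mulVec]
  refine ⟨by ext i j; simp [← hA.isHermitian.apply i j], fun x => ?_⟩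
  have hq : HasSum (fun n => a n * (star x ⬝ᵥ A.map (· ^ e n) *ᵥ x))
      (star x ⬝ᵥ A.map f *ᵥ x) := by
    simp only [dotProduct, mulVec, map_apply, Finset.mul_sum]
    refine hasSum_sum fun i _ => hasSum_sum fun j _ => ?_
    convert ((hf i j).mul_left (star x i * x j)) using 1 <;> (try ext) <;> ring
  exact hq.nonneg fun n => mul_nonneg (ha n) ((hA.map_pow _).dotProduct_mulVec_nonneg x)

open scoped MatrixOrder

variable [DecidableEq ι]

lemma algebraMap_hadamard {M : Matrix ι ι 𝕜} (hM : M.diag = 1) (r : ℝ) :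
    algebraMap ℝ _ r ⊙ M = algebraMap ℝ _ r := by
  ext i j
  rcases eq_or_ne i j with rfl | hij
  · simp [algebraMap_eq_diagonal, show M i i = 1 from congrFun hM i]
  · simp [algebraMap_eq_diagonal, hij]

lemma algebraMap_le_hadamard {A M : Matrix ι ι 𝕜} (hM : M.PosSemidef) (hMd : M.diag = 1)
    {r : ℝ} (h : algebraMap ℝ _ r ≤ A) : algebraMap ℝ _ r ≤ A ⊙ M := by
  simpa [le_iff, sub_hadamard, algebraMap_hadamard hMd] using (le_iff.1 h).hadamard hM

lemma hadamard_le_algebraMap {A M : Matrix ι ι 𝕜} (hM : M.PosSemidef) (hMd : M.diag = 1)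
    {r : ℝ} (h : A ≤ algebraMap ℝ _ r) : A ⊙ M ≤ algebraMap ℝ _ r := by
  simpa [le_iff, sub_hadamard, algebraMap_hadamard hMd] using (le_iff.1 h).hadamard hM

lemma posDef_of_algebraMap_le {A : Matrix ι ι 𝕜} {r : ℝ} (hr : 0 < r)
    (h : algebraMap ℝ _ r ≤ A) : A.PosDef := by
  simpa [Algebra.algebraMap_eq_smul_one] using (PosDef.one.smul hr).add_posSemidef (le_iff.1 h)

namespace IsHermitian

variable {A : Matrix ι ι 𝕜} (hA : A.IsHermitian)
include hA

lemma algebraMap_sInf_spectrum_le : algebraMap ℝ _ (sInf (spectrum ℝ A)) ≤ A :=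
  (algebraMap_le_iff_le_spectrum (ha := hA)).2 fun _ hx =>
    csInf_le finite_real_spectrum.bddBelow hx

lemma le_algebraMap_sSup_spectrum : A ≤ algebraMap ℝ _ (sSup (spectrum ℝ A)) :=
  (le_algebraMap_iff_spectrum_le (ha := hA)).2 fun _ hx =>
    le_csSup finite_real_spectrum.bddAbove hx

variable [Nonempty ι]

lemma spectrum_nonempty : (spectrum ℝ A).Nonempty :=
  ⟨_, hA.eigenvalues_mem_spectrum_real (Classical.arbitrary ι)⟩

lemma le_sInf_spectrum {r : ℝ} (h : algebraMap ℝ _ r ≤ A) : r ≤ sInf (spectrum ℝ A) :=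
  le_csInf hA.spectrum_nonempty ((algebraMap_le_iff_le_spectrum (ha := hA)).1 h)

lemma sSup_spectrum_le {r : ℝ} (h : A ≤ algebraMap ℝ _ r) : sSup (spectrum ℝ A) ≤ r :=
  csSup_le hA.spectrum_nonempty ((le_algebraMap_iff_spectrum_le (ha := hA)).1 h)

lemma sInf_spectrum_le_sSup_spectrum : sInf (spectrum ℝ A) ≤ sSup (spectrum ℝ A) :=
  csInf_le_csSup hA.spectrum_nonempty finite_real_spectrum.bddBelow
    finite_real_spectrum.bddAbove

end IsHermitian

lemma PosDef.sInf_spectrum_pos [Nonempty ι] {A : Matrix ι ι 𝕜} (hA : A.PosDef) :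
    0 < sInf (spectrum ℝ A) :=
  hA.isStrictlyPositive.spectrum_pos <|
    hA.isHermitian.spectrum_nonempty.csInf_mem finite_real_spectrum

end Matrix

section NTK

open InnerProductGeometry Real Matrix

variable {ι E : Type*} [NormedAddCommGroup E] [InnerProductSpace ℝ E]

lemma one_sub_angle_div_pi (x y : E) :
    1 - angle x y / π = 1 / 2 + arcsin (⟪x, y⟫ / (‖x‖ * ‖y‖)) / π := by
  rw [angle, arccos_eq_pi_div_two_sub_arcsin]
  field_simp
  ring

noncomputable def ntkMatrix (x : ι → E) : Matrix ι ι ℝ :=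
  .of fun i j => ⟪x i, x j⟫ * (1 - angle (x i) (x j) / π)

noncomputable def arcsinKernel (x : ι → E) : Matrix ι ι ℝ :=
  .of fun i j => 1 / 2 + arcsin (⟪x i, x j⟫ / (‖x i‖ * ‖x j‖)) / π

lemma ntkMatrix_eq_gram_hadamard (x : ι → E) : ntkMatrix x = gram ℝ x ⊙ arcsinKernel x := by
  ext i j
  simp [ntkMatrix, arcsinKernel, gram_apply, one_sub_angle_div_pi]

lemma arcsinKernel_diag {x : ι → E} (hx : ∀ i, x i ≠ 0) : (arcsinKernel x).diag = 1 := by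
  ext i
  have hxi : ‖x i‖ ≠ 0 := norm_ne_zero_iff.2 (hx i)
  have h : ⟪x i, x i⟫ / (‖x i‖ * ‖x i‖) = 1 := by
    rw [real_inner_self_eq_norm_mul_norm, div_self (mul_ne_zero hxi hxi)]
  simp only [diag_apply, arcsinKernel, of_apply, h, arcsin_one, Pi.one_apply]
  field_simp
  ring

lemma posSemidef_arcsinKernel [Fintype ι] (x : ι → E) : (arcsinKernel x).PosSemidef := by
  set U := gram ℝ fun i => ‖x i‖⁻¹ • x i
  have hU : U.PosSemidef := posSemidef_gram ℝ _
  have hUx (i j : ι) : U i j = ⟪x i, x j⟫ / (‖x i‖ * ‖x j‖) := by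
    simp only [U, gram_apply, real_inner_smul_left, real_inner_smul_right]
    ring
  have hU1 (i j : ι) : |U i j| ≤ 1 := hUx i j ▸ abs_real_inner_div_norm_mul_norm_le_one _ _
  have : arcsinKernel x = (1 / 2 : ℝ) • U.map (· ^ 0) + π⁻¹ • U.map arcsin := by
    ext i j
    simp [arcsinKernel, hUx, div_eq_inv_mul]
  rw [this]
  exact ((hU.map_pow 0).smul (by norm_num)).add ((hU.map_of_hasSum arcsinCoeff_nonneg _
    fun i j => hasSum_arcsin (hU1 i j)).smul (by positivity))

end NTK

open Matrix in
theorem shallow_relu_ntk_better_conditioning_general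
    {n d : ℕ} (hn : 0 < n)
    (x : Fin n → EuclideanSpace ℝ (Fin d)) (hx : ∀ i, x i ≠ 0)
    (G K : Matrix (Fin n) (Fin n) ℝ)
    (hG : ∀ i j, G i j = ⟪x i, x j⟫)
    (hK : ∀ i j, K i j = ⟪x i, x j⟫ * (1 - InnerProductGeometry.angle (x i) (x j) / Real.pi)) :
    sInf (spectrum ℝ G) ≤ sInf (spectrum ℝ K) ∧
    sSup (spectrum ℝ K) ≤ sSup (spectrum ℝ G) ∧
    (G.PosDef → K.PosDef ∧
      sSup (spectrum ℝ K) / sInf (spectrum ℝ K) ≤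
        sSup (spectrum ℝ G) / sInf (spectrum ℝ G)) := by
  have : Nonempty (Fin n) := ⟨⟨0, hn⟩⟩
  obtain rfl : G = gram ℝ x := Matrix.ext hG
  obtain rfl : K = gram ℝ x ⊙ arcsinKernel x :=
    (Matrix.ext hK).trans (ntkMatrix_eq_gram_hadamard x)
  have hM := posSemidef_arcsinKernel x
  have hGh := (posSemidef_gram ℝ x).isHermitian
  have hKh := hGh.hadamard hM.isHermitian
  have hlow := algebraMap_le_hadamard hM (arcsinKernel_diag hx) hGh.algebraMap_sInf_spectrum_le
  have hup := hadamard_le_algebraMap hM (arcsinKernel_diag hx) hGh.le_algebraMap_sSup_spectrum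
  refine ⟨hKh.le_sInf_spectrum hlow, hKh.sSup_spectrum_le hup, fun hGpd => ?_⟩
  have hpos := hGpd.sInf_spectrum_pos
  exact ⟨posDef_of_algebraMap_le hpos hlow,
    div_le_div₀ (hpos.le.trans hGh.sInf_spectrum_le_sSup_spectrum) (hKh.sSup_spectrum_le hup) hpos
      (hKh.le_sInf_spectrum hlow)⟩

/-- Theorem 5.1 of the paper: better NTK conditioning of the shallow
ReLU network relative to the linear model. Let `x 1, …, x n ∈ ℝ^d` be nonzero, let `G`
be the Gram matrix `G i j = ⟨x i, x j⟩`, and let `K` be the infinite-width NTK matrix of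
the shallow ReLU network, `K i j = ⟨x i, x j⟩ (1 − θ i j / π)` where `θ i j` is the angle
between `x i` and `x j`. Then `λ_min(K) ≥ λ_min(G)` and `λ_max(K) ≤ λ_max(G)`
(eigenvalue extremes expressed via `sInf`/`sSup` of the spectrum); consequently, if `G`
is positive definite then `K` is positive definite and `κ(K) ≤ κ(G)`. -/
theorem shallow_relu_ntk_better_conditioning
    {n d : ℕ} (hn : 0 < n) (hd : 0 < d)
    (x : Fin n → EuclideanSpace ℝ (Fin d)) (hx : ∀ i, x i ≠ 0)
    (G K : Matrix (Fin n) (Fin n) ℝ)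
    (hG : ∀ i j, G i j = ⟪x i, x j⟫)
    (hK : ∀ i j, K i j = ⟪x i, x j⟫ * (1 - InnerProductGeometry.angle (x i) (x j) / Real.pi)) :
    sInf (spectrum ℝ G) ≤ sInf (spectrum ℝ K) ∧
    sSup (spectrum ℝ K) ≤ sSup (spectrum ℝ G) ∧
    (G.PosDef → K.PosDef ∧
      sSup (spectrum ℝ K) / sInf (spectrum ℝ K) ≤
        sSup (spectrum ℝ G) / sInf (spectrum ℝ G)) :=
  shallow_relu_ntk_better_conditioning_general hn x hx G K hG hK
end
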